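/- arXiv:2009.11849 — 2 statements merged into one kernel-verified Lean document; each statement's English description precedes it below -/
import Mathlib

section
/- For every rooted tree T, the toric ideals of A_T and B_T coincide: ker φ_{A_T} = ker φ_{B_T} as ideals of the polynomial ring ℂ[p_{ij} : {i,j} a 2-element subset of {0,…,n}]. -/
attribute [local instance] Classical.propDecidable

/-- A rooted tree on leaves `0, …, n`, rooted at the leaf `0`, with all edges directed
away from the root, no vertices of degree two, together with its (uniquely determined)
most-recent-common-ancestor function `lca` on leaf labels.  The parent map `par` sends
every non-root vertex to the vertex its unique incoming edge comes from, and fixes the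
root.  A vertex `u` is a descendant of `v` iff some iterate of `par` sends `u` to `v`. -/
structure PhyloTree where
  n : ℕ
  hn : 1 ≤ n
  V : Type
  fintypeV : Fintype V
  leaf : Fin (n + 1) ↪ V
  par : V → V
  par_root : par (leaf 0) = leaf 0
  par_ne : ∀ v : V, v ≠ leaf 0 → par v ≠ v
  reaches_root : ∀ v : V, ∃ k : ℕ, par^[k] v = leaf 0
  leaf_iff : ∀ v : V, v ≠ leaf 0 → (v ∈ Set.range leaf ↔ ∀ u, par u ≠ v)
  root_unique_child : ∃! u : V, u ≠ leaf 0 ∧ par u = leaf 0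
  no_degree_two : ∀ v : V, v ∉ Set.range leaf → ∃ u w : V, u ≠ w ∧ par u = v ∧ par w = v
  lca : Fin (n + 1) → Fin (n + 1) → V
  lca_anc_left : ∀ i j, ∃ k : ℕ, par^[k] (leaf i) = lca i j
  lca_anc_right : ∀ i j, ∃ k : ℕ, par^[k] (leaf j) = lca i j
  lca_min : ∀ i j (w : V), (∃ k : ℕ, par^[k] (leaf i) = w) →
      (∃ k : ℕ, par^[k] (leaf j) = w) → ∃ k : ℕ, par^[k] (lca i j) = w

instance (T : PhyloTree) : Fintype T.V := T.fintypeV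

/-- `T.isAnc v u` : `v` is an ancestor of `u`, i.e. `u` is a descendant of `v`
(every vertex is a descendant of itself). -/
def PhyloTree.isAnc (T : PhyloTree) (v u : T.V) : Prop := ∃ k : ℕ, T.par^[k] u = v

/-- The 2-element subsets `{i,j}` of `{0, …, n}`, encoded as ordered pairs `i < j`. -/
abbrev PairIdx (n : ℕ) := {q : Fin (n + 1) × Fin (n + 1) // q.1 < q.2}

/-- The non-root vertices of `T`; these index the rows of `A_T`, and are also in
bijection `v ↦ e(v)` with the edges of `T`, so they also index the rows of `B_T`. -/
abbrev PhyloTree.NR (T : PhyloTree) := {v : T.V // v ≠ T.leaf 0}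

/-- The matrix `A_T`, with rows indexed by non-root vertices and columns indexed by
2-element subsets `{i,j}` of `{0, …, n}`: the entry is `1` if `v = i`, `v = j` or
`v = lca(i,j)`, and `0` otherwise. -/
noncomputable def Amat (T : PhyloTree) (R : Type*) [Zero R] [One R] :
    Matrix T.NR (PairIdx T.n) R :=
  Matrix.of fun v s =>
    if v.1 = T.leaf s.1.1 ∨ v.1 = T.leaf s.1.2 ∨ v.1 = T.lca s.1.1 s.1.2 then 1 else 0

/-- `T.onPath v i j` : the edge `e(v)` lies on the unique path between the leaves
`i` and `j`, i.e. `v` lies strictly below `lca(i,j)` on the segment from `lca(i,j)`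
down to `i` or on the segment from `lca(i,j)` down to `j`. -/
def PhyloTree.onPath (T : PhyloTree) (v : T.V) (i j : Fin (T.n + 1)) : Prop :=
  v ≠ T.lca i j ∧ T.isAnc (T.lca i j) v ∧ (T.isAnc v (T.leaf i) ∨ T.isAnc v (T.leaf j))

/-- The matrix `B_T`, with rows indexed by the edges `e(v)` of `T` (equivalently, by the
non-root vertices `v`) and columns indexed by 2-element subsets `{i,j}` of `{0, …, n}`:
the entry is `1` if `e(v) ∈ P(i,j)` and `0` otherwise. -/
noncomputable def Bmat (T : PhyloTree) (R : Type*) [Zero R] [One R] :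
    Matrix T.NR (PairIdx T.n) R :=
  Matrix.of fun v s => if T.onPath v.1 s.1.1 s.1.2 then 1 else 0

/-- The monomial map `φ_M` associated to a nonnegative-integer matrix `M`, sending
`p_c` to `∏_r t_r ^ M(r,c)`. -/
noncomputable def toricMap {R C : Type*} [Fintype R] (M : Matrix R C ℕ) :
    MvPolynomial C ℂ →ₐ[ℂ] MvPolynomial R ℂ :=
  MvPolynomial.aeval fun c => ∏ r : R, MvPolynomial.X r ^ M r c
namespace PhyloTree
variable (T : PhyloTree)

lemma iterate_root (k : ℕ) : T.par^[k] (T.leaf 0) = T.leaf 0 := by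
  induction k with
  | zero => rfl
  | succ k ih => rw [Function.iterate_succ_apply', ih, T.par_root]

lemma isAnc_refl (v : T.V) : T.isAnc v v := ⟨0, rfl⟩

lemma isAnc_trans {a b c : T.V} (h1 : T.isAnc a b) (h2 : T.isAnc b c) : T.isAnc a c := by
  obtain ⟨k, hk⟩ := h1; obtain ⟨l, hl⟩ := h2
  exact ⟨k + l, by rw [Function.iterate_add_apply, hl, hk]⟩

lemma eq_root_of_isAnc_root {v : T.V} (h : T.isAnc v (T.leaf 0)) : v = T.leaf 0 := by
  obtain ⟨k, hk⟩ := h; rw [T.iterate_root] at hk; exact hk.symm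

lemma isAnc_root (v : T.V) : T.isAnc (T.leaf 0) v := T.reaches_root v

lemma isAnc_antisymm {a b : T.V} (h1 : T.isAnc a b) (h2 : T.isAnc b a) : a = b := by
  obtain ⟨k, hk⟩ := h1; obtain ⟨l, hl⟩ := h2
  rcases Nat.eq_zero_or_pos (k + l) with h0 | hpos
  · obtain ⟨rfl, rfl⟩ : k = 0 ∧ l = 0 := by omega
    exact hk.symm
  · -- b is periodic with period k+l
    have hper : ∀ t : ℕ, T.par^[t * (k + l)] b = b := by
      intro t
      induction t with
      | zero => simp
      | succ t ih =>
        have he : (t + 1) * (k + l) = (l + k) + t * (k + l) := by ring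
        rw [he, Function.iterate_add_apply, ih, Function.iterate_add_apply, hk, hl]
    obtain ⟨K, hK⟩ := T.reaches_root b
    have hbig : K ≤ (K + 1) * (k + l) := by nlinarith
    have : T.par^[(K + 1) * (k + l)] b = T.leaf 0 := by
      have : (K + 1) * (k + l) = ((K + 1) * (k + l) - K) + K := by omega
      rw [this, Function.iterate_add_apply, hK, T.iterate_root]
    have hb : b = T.leaf 0 := by rw [← hper (K + 1), this]
    subst hb
    rw [T.iterate_root] at hk
    exact hk.symm

lemma isAnc_total {a b u : T.V} (h1 : T.isAnc a u) (h2 : T.isAnc b u) :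
    T.isAnc a b ∨ T.isAnc b a := by
  obtain ⟨k, hk⟩ := h1; obtain ⟨l, hl⟩ := h2
  rcases le_total k l with h | h
  · right
    exact ⟨l - k, by rw [← hk, ← Function.iterate_add_apply, Nat.sub_add_cancel h, hl]⟩
  · left
    exact ⟨k - l, by rw [← hl, ← Function.iterate_add_apply, Nat.sub_add_cancel h, hk]⟩

lemma leaf_no_desc {m : Fin (T.n + 1)} (hm : m ≠ 0) {u : T.V}
    (h : T.isAnc (T.leaf m) u) : u = T.leaf m := by
  obtain ⟨k, hk⟩ := h
  cases k with
  | zero => exact hk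
  | succ k =>
    exfalso
    have hne : T.leaf m ≠ T.leaf 0 := fun h => hm (T.leaf.injective h)
    have := (T.leaf_iff (T.leaf m) hne).mp ⟨m, rfl⟩
    rw [Function.iterate_succ_apply'] at hk
    exact this _ hk

lemma isAnc_lca_iff (i j : Fin (T.n + 1)) (v : T.V) :
    T.isAnc v (T.lca i j) ↔ T.isAnc v (T.leaf i) ∧ T.isAnc v (T.leaf j) := by
  constructor
  · intro h
    exact ⟨T.isAnc_trans h ⟨_, (T.lca_anc_left i j).choose_spec⟩,
           T.isAnc_trans h ⟨_, (T.lca_anc_right i j).choose_spec⟩⟩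
  · rintro ⟨h1, h2⟩
    exact T.lca_min i j v h1 h2

lemma lca_anc_left' (i j : Fin (T.n + 1)) : T.isAnc (T.lca i j) (T.leaf i) :=
  T.lca_anc_left i j

lemma lca_anc_right' (i j : Fin (T.n + 1)) : T.isAnc (T.lca i j) (T.leaf j) :=
  T.lca_anc_right i j

lemma lca_zero (j : Fin (T.n + 1)) : T.lca 0 j = T.leaf 0 := by
  obtain ⟨k, hk⟩ := T.lca_anc_left 0 j
  rw [T.iterate_root] at hk; exact hk.symm

lemma lca_ne_leaf {i j m : Fin (T.n + 1)} (hij : i ≠ j) (hm : m ≠ 0) :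
    T.lca i j ≠ T.leaf m := by
  intro h
  have h1 : T.leaf i = T.leaf m := T.leaf_no_desc hm (h ▸ T.lca_anc_left' i j)
  have h2 : T.leaf j = T.leaf m := T.leaf_no_desc hm (h ▸ T.lca_anc_right' i j)
  exact hij (T.leaf.injective (h1.trans h2.symm))

/-- For `i, j ≠ 0`, the lca is not the root. -/
lemma lca_ne_root {i j : Fin (T.n + 1)} (hi : i ≠ 0) (hj : j ≠ 0) :
    T.lca i j ≠ T.leaf 0 := by
  obtain ⟨c0, ⟨hc0ne, hc0par⟩, hc0uniq⟩ := T.root_unique_child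
  have key : ∀ m : Fin (T.n + 1), m ≠ 0 → T.isAnc c0 (T.leaf m) := by
    intro m hm
    have hex : ∃ k : ℕ, T.par^[k] (T.leaf m) = T.leaf 0 := T.reaches_root _
    classical
    have hk : T.par^[Nat.find hex] (T.leaf m) = T.leaf 0 := Nat.find_spec hex
    have hkpos : Nat.find hex ≠ 0 := by
      intro h0
      rw [h0] at hk
      exact hm (T.leaf.injective hk)
    obtain ⟨k', hk'⟩ : ∃ k', Nat.find hex = k' + 1 := ⟨Nat.find hex - 1, by omega⟩
    have hne : T.par^[k'] (T.leaf m) ≠ T.leaf 0 := by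
      intro h
      exact Nat.find_min hex (by omega) h
    have hchild : T.par (T.par^[k'] (T.leaf m)) = T.leaf 0 := by
      rw [hk'] at hk
      rw [← Function.iterate_succ_apply' T.par k']
      exact hk
    have : T.par^[k'] (T.leaf m) = c0 := hc0uniq _ ⟨hne, hchild⟩
    exact ⟨k', this⟩
  intro hroot
  have hanc : T.isAnc c0 (T.lca i j) :=
    T.lca_min i j c0 (key i hi) (key j hj)
  obtain ⟨k, hk⟩ := hanc
  rw [hroot, T.iterate_root] at hk
  exact hc0ne hk.symm

/-! ### Row functions -/

/-- The lca of the pair `s`. -/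
def lcaS (s : PairIdx T.n) : T.V := T.lca s.1.1 s.1.2

/-- Indicator that `w` is an ancestor of the lca of `s`. -/
noncomputable def Fq (w : T.NR) (s : PairIdx T.n) : ℚ :=
  if T.isAnc w.1 (T.lcaS s) then 1 else 0

/-- Indicator that `m` belongs to the pair `s`. -/
noncomputable def eB (m : Fin (T.n + 1)) (s : PairIdx T.n) : ℚ :=
  if m = s.1.1 ∨ m = s.1.2 then 1 else 0

/-- Indicator that `w` is an ancestor of leaf `m`. -/
noncomputable def chi (w : T.NR) (m : Fin (T.n + 1)) : ℚ :=
  if T.isAnc w.1 (T.leaf m) then 1 else 0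

/-- Coefficients expressing rows of `B` in terms of rows of `A`. -/
noncomputable def cB (v u : T.NR) : ℚ :=
  if T.isAnc v.1 u.1 then (if u.1 ∈ Set.range T.leaf then 1 else -2) else 0

/-- The non-root leaf `m ≠ 0` as an element of `T.NR`. -/
def leafNR (m : Fin (T.n + 1)) (hm : m ≠ 0) : T.NR :=
  ⟨T.leaf m, fun h => hm (T.leaf.injective h)⟩

lemma s_ne (s : PairIdx T.n) : s.1.1 ≠ s.1.2 := ne_of_lt s.2

lemma s_snd_ne_zero (s : PairIdx T.n) : s.1.2 ≠ 0 := by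
  intro h
  have h2 := s.2
  rw [h] at h2
  exact absurd h2 (by simp)

lemma chi_zero (w : T.NR) : T.chi w 0 = 0 := by
  rw [chi, if_neg]
  intro h
  exact w.2 (T.eq_root_of_isAnc_root h)

lemma pair_sum (c : Fin (T.n + 1) → ℚ) (s : PairIdx T.n) :
    ∑ m : Fin (T.n + 1), c m * T.eB m s = c s.1.1 + c s.1.2 := by
  have key : ∀ m, c m * T.eB m s
      = (if m = s.1.1 then c m else 0) + (if m = s.1.2 then c m else 0) := by
    intro m
    have hij := T.s_ne s
    rcases eq_or_ne m s.1.1 with h1 | h1 <;> rcases eq_or_ne m s.1.2 with h2 | h2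
    · exact absurd (h1 ▸ h2) (T.s_ne s)
    · simp [eB, h1, h2, hij]
    · simp [eB, h1, h2, hij, Ne.symm hij]
    · simp [eB, h1, h2]
  rw [Finset.sum_congr rfl fun m _ => key m, Finset.sum_add_distrib]
  simp

lemma A_decomp (u : T.NR) (s : PairIdx T.n) :
    ((Amat T ℕ u s : ℕ) : ℚ)
      = (if u.1 = T.leaf s.1.1 then 1 else 0) + (if u.1 = T.leaf s.1.2 then 1 else 0)
        + (if u.1 = T.lcaS s then 1 else 0) := by
  have hij := T.s_ne s
  have hj0 := T.s_snd_ne_zero s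
  have hA : Amat T ℕ u s
      = if (u.1 = T.leaf s.1.1 ∨ u.1 = T.leaf s.1.2 ∨ u.1 = T.lcaS s) then 1 else 0 := rfl
  by_cases h1 : u.1 = T.leaf s.1.1 <;> by_cases h2 : u.1 = T.leaf s.1.2 <;>
    by_cases h3 : u.1 = T.lcaS s
  · exact absurd (T.leaf.injective (h1.symm.trans h2)) hij
  · exact absurd (T.leaf.injective (h1.symm.trans h2)) hij
  · -- u = leaf i = lca : impossible
    exfalso
    rcases eq_or_ne s.1.1 0 with hi0 | hi0
    · exact u.2 (by rw [h1, hi0])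
    · exact T.lca_ne_leaf hij hi0 (h3.symm.trans h1)
  · rw [hA, if_pos (Or.inl h1), if_pos h1, if_neg h2, if_neg h3]; norm_num
  · exact absurd (h3.symm.trans h2) (T.lca_ne_leaf hij hj0)
  · rw [hA, if_pos (Or.inr (Or.inl h2)), if_neg h1, if_pos h2, if_neg h3]; norm_num
  · rw [hA, if_pos (Or.inr (Or.inr h3)), if_neg h1, if_neg h2, if_pos h3]; norm_num
  · rw [hA, if_neg (by tauto), if_neg h1, if_neg h2, if_neg h3]; norm_num

lemma B_eq (v : T.NR) (s : PairIdx T.n) :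
    ((Bmat T ℕ v s : ℕ) : ℚ)
      = T.chi v s.1.1 + T.chi v s.1.2 - 2 * T.Fq v s := by
  set i := s.1.1
  set j := s.1.2
  set L := T.lcaS s with hL
  have hLi : T.isAnc L (T.leaf i) := T.lca_anc_left' i j
  have hLj : T.isAnc L (T.leaf j) := T.lca_anc_right' i j
  by_cases hvL : T.isAnc v.1 L
  · have hci : T.isAnc v.1 (T.leaf i) := T.isAnc_trans hvL hLi
    have hcj : T.isAnc v.1 (T.leaf j) := T.isAnc_trans hvL hLj
    have hB : ¬ T.onPath v.1 i j := by
      rintro ⟨hne, hanc, -⟩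
      exact hne (T.isAnc_antisymm hvL hanc)
    simp [Bmat, show ¬ T.onPath v.1 s.1.1 s.1.2 from hB, chi, hci, hcj, Fq,
      show T.isAnc v.1 (T.lcaS s) from hvL]
    norm_num
  · have hFq : T.Fq v s = 0 := by simp [Fq, show ¬ T.isAnc v.1 (T.lcaS s) from hvL]
    have hnotboth : ¬ (T.isAnc v.1 (T.leaf i) ∧ T.isAnc v.1 (T.leaf j)) := by
      intro h
      exact hvL ((T.isAnc_lca_iff i j v.1).mpr h)
    by_cases hci : T.isAnc v.1 (T.leaf i)
    · have hcj : ¬ T.isAnc v.1 (T.leaf j) := fun h => hnotboth ⟨hci, h⟩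
      have hB : T.onPath v.1 i j := by
        refine ⟨fun h => hvL (h ▸ T.isAnc_refl v.1), ?_, Or.inl hci⟩
        exact (T.isAnc_total hLi hci).resolve_right hvL
      simp [Bmat, show T.onPath v.1 s.1.1 s.1.2 from hB, chi, hci, hcj, hFq]
    · by_cases hcj : T.isAnc v.1 (T.leaf j)
      · have hB : T.onPath v.1 i j := by
          refine ⟨fun h => hvL (h ▸ T.isAnc_refl v.1), ?_, Or.inr hcj⟩
          exact (T.isAnc_total hLj hcj).resolve_right hvL
        simp [Bmat, show T.onPath v.1 s.1.1 s.1.2 from hB, chi, hci, hcj, hFq]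
      · have hB : ¬ T.onPath v.1 i j := by
          rintro ⟨-, -, h | h⟩
          exacts [hci h, hcj h]
        simp [Bmat, show ¬ T.onPath v.1 s.1.1 s.1.2 from hB, chi, hci, hcj, hFq]

lemma eB_eq_B (m : Fin (T.n + 1)) (hm : m ≠ 0) (s : PairIdx T.n) :
    T.eB m s = ((Bmat T ℕ (T.leafNR m hm) s : ℕ) : ℚ) := by
  rw [T.B_eq]
  have h1 : ∀ m' : Fin (T.n + 1), T.chi (T.leafNR m hm) m'
      = if m = m' then 1 else 0 := by
    intro m'
    rcases eq_or_ne m m' with h | h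
    · simp [chi, leafNR, ← h, T.isAnc_refl]
    · rw [chi, if_neg, if_neg h]
      intro hanc
      exact h (T.leaf.injective (T.leaf_no_desc hm hanc).symm)
  have h2 : T.Fq (T.leafNR m hm) s = 0 := by
    rw [Fq, if_neg]
    intro hanc
    have := T.leaf_no_desc hm hanc
    exact T.lca_ne_leaf (T.s_ne s) hm this
  rw [h1, h1, h2, eB]
  have hij := T.s_ne s
  rcases eq_or_ne m s.1.1 with ha | ha <;> rcases eq_or_ne m s.1.2 with hb | hb
  · exact absurd (ha ▸ hb) (T.s_ne s)
  all_goals simp [ha, hb, hij, Ne.symm hij]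

lemma sum_pick (c : T.NR → ℚ) (x : T.V) :
    ∑ u : T.NR, c u * (if u.1 = x then 1 else 0)
      = if hx : x = T.leaf 0 then 0 else c ⟨x, hx⟩ := by
  split
  · next hx =>
    refine Finset.sum_eq_zero fun u _ => ?_
    rw [if_neg (fun h => u.2 (h.trans hx)), mul_zero]
  · next hx =>
    rw [Finset.sum_eq_single (⟨x, hx⟩ : T.NR)]
    · simp
    · intro u _ hu
      rw [if_neg (fun h => hu (Subtype.ext h)), mul_zero]
    · intro h
      exact absurd (Finset.mem_univ _) h

lemma rowB (v : T.NR) (s : PairIdx T.n) :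
    ((Bmat T ℕ v s : ℕ) : ℚ)
      = ∑ u : T.NR, T.cB v u * ((Amat T ℕ u s : ℕ) : ℚ) := by
  have expand : ∑ u : T.NR, T.cB v u * ((Amat T ℕ u s : ℕ) : ℚ)
      = (∑ u : T.NR, T.cB v u * (if u.1 = T.leaf s.1.1 then 1 else 0))
        + (∑ u : T.NR, T.cB v u * (if u.1 = T.leaf s.1.2 then 1 else 0))
        + (∑ u : T.NR, T.cB v u * (if u.1 = T.lcaS s then 1 else 0)) := by
    rw [← Finset.sum_add_distrib, ← Finset.sum_add_distrib]
    refine Finset.sum_congr rfl fun u _ => ?_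
    rw [T.A_decomp u s, mul_add, mul_add]
  have leaf_term : ∀ m : Fin (T.n + 1),
      (∑ u : T.NR, T.cB v u * (if u.1 = T.leaf m then 1 else 0)) = T.chi v m := by
    intro m
    rw [T.sum_pick]
    rcases eq_or_ne m 0 with rfl | hm
    · rw [dif_pos rfl, T.chi_zero]
    · rw [dif_neg (fun h => hm (T.leaf.injective h))]
      simp [cB, chi, Set.mem_range]
  have lca_term : (∑ u : T.NR, T.cB v u * (if u.1 = T.lcaS s then 1 else 0))
      = -2 * T.Fq v s := by
    rw [T.sum_pick]
    by_cases hroot : T.lcaS s = T.leaf 0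
    · rw [dif_pos hroot, Fq, if_neg, mul_zero]
      intro h
      rw [hroot] at h
      exact v.2 (T.eq_root_of_isAnc_root h)
    · rw [dif_neg hroot]
      have hnotleaf : T.lcaS s ∉ Set.range T.leaf := by
        rintro ⟨m, hm⟩
        rcases eq_or_ne m 0 with rfl | hm0
        · exact hroot hm.symm
        · exact T.lca_ne_leaf (T.s_ne s) hm0 hm.symm
      rw [cB, if_neg hnotleaf, Fq]
      by_cases hanc : T.isAnc v.1 (T.lcaS s)
      · rw [if_pos hanc, if_pos hanc]; norm_num
      · rw [if_neg hanc, if_neg hanc]; norm_num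
  rw [T.B_eq, expand, leaf_term, leaf_term, lca_term]
  ring

lemma F_eq (w : T.NR) (s : PairIdx T.n) :
    2 * T.Fq w s
      = (∑ m : Fin (T.n + 1), T.chi w m * T.eB m s) - ((Bmat T ℕ w s : ℕ) : ℚ) := by
  rw [T.pair_sum (T.chi w) s, T.B_eq]
  ring

lemma A_leaf_eq (u : T.NR) (m : Fin (T.n + 1)) (hm : m ≠ 0) (hu : u.1 = T.leaf m)
    (s : PairIdx T.n) : ((Amat T ℕ u s : ℕ) : ℚ) = T.eB m s := by
  rw [T.A_decomp, eB]
  have h3 : ¬ u.1 = T.lcaS s := by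
    rw [hu]
    exact fun h => T.lca_ne_leaf (T.s_ne s) hm h.symm
  have e1 : (u.1 = T.leaf s.1.1) ↔ m = s.1.1 :=
    ⟨fun h => T.leaf.injective (hu ▸ h), fun h => by rw [hu, h]⟩
  have e2 : (u.1 = T.leaf s.1.2) ↔ m = s.1.2 :=
    ⟨fun h => T.leaf.injective (hu ▸ h), fun h => by rw [hu, h]⟩
  have hij := T.s_ne s
  rw [if_neg h3]
  rcases eq_or_ne m s.1.1 with ha | ha <;> rcases eq_or_ne m s.1.2 with hb | hb
  · exact absurd (ha ▸ hb) hij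
  all_goals simp [e1, e2, ha, hb, hij, Ne.symm hij]

lemma A_internal (u : T.NR) (hu : u.1 ∉ Set.range T.leaf) (s : PairIdx T.n) :
    ((Amat T ℕ u s : ℕ) : ℚ) = if u.1 = T.lcaS s then 1 else 0 := by
  rw [T.A_decomp]
  rw [if_neg (fun h => hu ⟨s.1.1, h.symm⟩), if_neg (fun h => hu ⟨s.1.2, h.symm⟩)]
  ring

lemma par_anc {c : T.V} : T.isAnc (T.par c) c := ⟨1, rfl⟩

/-- The unique-child-on-the-path counting identity. -/
lemma lca_point (u : T.NR) (s : PairIdx T.n) :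
    (if u.1 = T.lcaS s then (1 : ℚ) else 0)
      = T.Fq u s - ∑ c : T.NR, (if T.par c.1 = u.1 then (1 : ℚ) else 0) * T.Fq c s := by
  have hterm : ∀ c : T.NR, (if T.par c.1 = u.1 then (1 : ℚ) else 0) * T.Fq c s
      = if (T.par c.1 = u.1 ∧ T.isAnc c.1 (T.lcaS s)) then 1 else 0 := by
    intro c
    rw [Fq]
    by_cases h1 : T.par c.1 = u.1 <;> by_cases h2 : T.isAnc c.1 (T.lcaS s) <;>
      simp [h1, h2]
  rw [Finset.sum_congr rfl fun c _ => hterm c, Finset.sum_boole]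
  set P : T.NR → Prop := fun c => T.par c.1 = u.1 ∧ T.isAnc c.1 (T.lcaS s) with hP
  have hchild_ne : ∀ c : T.NR, T.par c.1 = u.1 → c.1 ≠ u.1 := by
    intro c hpar hcu
    rw [hcu] at hpar
    exact T.par_ne u.1 u.2 hpar
  by_cases hLu : u.1 = T.lcaS s
  · -- lca equals u : Fq u = 1, no child on path
    have hFu : T.Fq u s = 1 := by rw [Fq, if_pos (hLu ▸ T.isAnc_refl u.1)]
    have hempty : Finset.univ.filter P = ∅ := by
      rw [Finset.filter_eq_empty_iff]
      rintro c - ⟨hpar, hanc⟩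
      -- c is a child of u and an ancestor of lca = u, so c = u, contradiction
      have h1 : T.isAnc u.1 c.1 := hpar ▸ T.par_anc
      have h2 : T.isAnc c.1 u.1 := hLu ▸ hanc
      exact hchild_ne c hpar (T.isAnc_antisymm h2 h1)
    rw [if_pos hLu, hFu, hempty]
    simp
  · by_cases hanc : T.isAnc u.1 (T.lcaS s)
    · -- u is a strict ancestor of the lca: exactly one child on the path
      have hFu : T.Fq u s = 1 := by rw [Fq, if_pos hanc]
      obtain ⟨k, hk⟩ := hanc
      have hkne : k ≠ 0 := by
        intro h0
        rw [h0] at hk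
        exact hLu hk.symm
      obtain ⟨k', rfl⟩ : ∃ k', k = k' + 1 := ⟨k - 1, by omega⟩
      rw [Function.iterate_succ_apply'] at hk
      have hc0nr : T.par^[k'] (T.lcaS s) ≠ T.leaf 0 := by
        intro h
        rw [h, T.par_root] at hk
        exact u.2 hk.symm
      set c0 : T.NR := ⟨T.par^[k'] (T.lcaS s), hc0nr⟩ with hc0
      have hc0P : P c0 := ⟨hk, ⟨k', rfl⟩⟩
      have huniq : ∀ c : T.NR, P c → c = c0 := by
        rintro c ⟨hpar, hancc⟩
        have htot := T.isAnc_total hancc hc0P.2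
        have key : ∀ a b : T.NR, T.par a.1 = u.1 → T.par b.1 = u.1 →
            T.isAnc a.1 b.1 → a = b := by
          rintro a b hpa hpb ⟨j, hj⟩
          cases j with
          | zero => exact Subtype.ext hj.symm
          | succ j =>
            exfalso
            rw [Function.iterate_succ_apply, hpb] at hj
            -- a is an ancestor of u via iterates, and u is an ancestor of a via par
            have h1 : T.isAnc a.1 u.1 := ⟨j, hj⟩
            have h2 : T.isAnc u.1 a.1 := hpa ▸ T.par_anc
            exact hchild_ne a hpa (T.isAnc_antisymm h1 h2)
        rcases htot with h | h
        · exact key c c0 hpar hc0P.1 h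
        · exact (key c0 c hc0P.1 hpar h).symm
      have hfilter : Finset.univ.filter P = {c0} := by
        ext c
        simp only [Finset.mem_filter, Finset.mem_univ, true_and, Finset.mem_singleton]
        exact ⟨fun h => huniq c h, fun h => h ▸ hc0P⟩
      rw [if_neg hLu, hFu, hfilter]
      simp
    · -- u is not an ancestor of the lca
      have hFu : T.Fq u s = 0 := by rw [Fq, if_neg hanc]
      have hempty : Finset.univ.filter P = ∅ := by
        rw [Finset.filter_eq_empty_iff]
        rintro c - ⟨hpar, hancc⟩
        exact hanc (T.isAnc_trans (hpar ▸ T.par_anc) hancc)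
      rw [if_neg hLu, hFu, hempty]
      simp

/-! ### Weighted sums -/

variable {T}

/-- Weighted sum of a row of `A` against a weight vector `d`. -/
noncomputable def SA (d : PairIdx T.n →₀ ℕ) (u : T.NR) : ℚ :=
  ∑ s : PairIdx T.n, ((Amat T ℕ u s : ℕ) : ℚ) * (d s : ℚ)

/-- Weighted sum of a row of `B` against a weight vector `d`. -/
noncomputable def SB (d : PairIdx T.n →₀ ℕ) (v : T.NR) : ℚ :=
  ∑ s : PairIdx T.n, ((Bmat T ℕ v s : ℕ) : ℚ) * (d s : ℚ)

noncomputable def SE (d : PairIdx T.n →₀ ℕ) (m : Fin (T.n + 1)) : ℚ :=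
  ∑ s : PairIdx T.n, T.eB m s * (d s : ℚ)

noncomputable def SF (d : PairIdx T.n →₀ ℕ) (w : T.NR) : ℚ :=
  ∑ s : PairIdx T.n, T.Fq w s * (d s : ℚ)

variable (T)

lemma SB_eq (d : PairIdx T.n →₀ ℕ) (v : T.NR) :
    SB d v = ∑ u : T.NR, T.cB v u * SA d u := by
  unfold SB SA
  simp_rw [Finset.mul_sum]
  rw [Finset.sum_comm]
  refine Finset.sum_congr rfl fun s _ => ?_
  rw [T.rowB v s, Finset.sum_mul]
  exact Finset.sum_congr rfl fun u _ => by ring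

lemma SF_eq (d : PairIdx T.n →₀ ℕ) (w : T.NR) :
    2 * SF d w = (∑ m : Fin (T.n + 1), T.chi w m * SE d m) - SB d w := by
  unfold SF SE SB
  rw [Finset.mul_sum]
  simp_rw [Finset.mul_sum]
  rw [Finset.sum_comm, ← Finset.sum_sub_distrib]
  refine Finset.sum_congr rfl fun s _ => ?_
  have h1 : (∑ m : Fin (T.n + 1), T.chi w m * (T.eB m s * (d s : ℚ)))
      = (∑ m : Fin (T.n + 1), T.chi w m * T.eB m s) * (d s : ℚ) := by
    rw [Finset.sum_mul]
    exact Finset.sum_congr rfl fun m _ => by ring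
  rw [h1]
  calc 2 * (T.Fq w s * (d s : ℚ)) = (2 * T.Fq w s) * (d s : ℚ) := by ring
    _ = ((∑ m : Fin (T.n + 1), T.chi w m * T.eB m s) - ((Bmat T ℕ w s : ℕ) : ℚ))
          * (d s : ℚ) := by rw [T.F_eq w s]
    _ = _ := by ring

lemma SE_eq_SB (d : PairIdx T.n →₀ ℕ) (m : Fin (T.n + 1)) (hm : m ≠ 0) :
    SE d m = SB d (T.leafNR m hm) :=
  Finset.sum_congr rfl fun s _ => by rw [T.eB_eq_B m hm s]

lemma SA_leaf (d : PairIdx T.n →₀ ℕ) (u : T.NR) (m : Fin (T.n + 1)) (hm : m ≠ 0)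
    (hu : u.1 = T.leaf m) : SA d u = SE d m :=
  Finset.sum_congr rfl fun s _ => by rw [T.A_leaf_eq u m hm hu s]

lemma SA_internal (d : PairIdx T.n →₀ ℕ) (u : T.NR) (hu : u.1 ∉ Set.range T.leaf) :
    SA d u = SF d u - ∑ c : T.NR, (if T.par c.1 = u.1 then (1 : ℚ) else 0) * SF d c := by
  unfold SA SF
  simp_rw [Finset.mul_sum]
  rw [Finset.sum_comm, ← Finset.sum_sub_distrib]
  refine Finset.sum_congr rfl fun s _ => ?_
  have h1 : (∑ c : T.NR, (if T.par c.1 = u.1 then (1 : ℚ) else 0) * (T.Fq c s * (d s : ℚ)))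
      = (∑ c : T.NR, (if T.par c.1 = u.1 then (1 : ℚ) else 0) * T.Fq c s) * (d s : ℚ) := by
    rw [Finset.sum_mul]
    exact Finset.sum_congr rfl fun c _ => by ring
  rw [h1, T.A_internal u hu s, T.lca_point u s]
  ring

lemma dirAB (d d' : PairIdx T.n →₀ ℕ) (hA : ∀ u, SA d u = SA d' u) :
    ∀ v, SB d v = SB d' v := by
  intro v
  rw [T.SB_eq, T.SB_eq]
  exact Finset.sum_congr rfl fun u _ => by rw [hA u]

lemma dirBA (d d' : PairIdx T.n →₀ ℕ) (hB : ∀ v, SB d v = SB d' v) :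
    ∀ u, SA d u = SA d' u := by
  have hE : ∀ m (hm : m ≠ 0), SE d m = SE d' m := fun m hm => by
    rw [T.SE_eq_SB d m hm, T.SE_eq_SB d' m hm, hB]
  have hEchi : ∀ (w : T.NR) m, T.chi w m * SE d m = T.chi w m * SE d' m := by
    intro w m
    rcases eq_or_ne m 0 with rfl | hm
    · rw [T.chi_zero, zero_mul, zero_mul]
    · rw [hE m hm]
  have hF : ∀ w, SF d w = SF d' w := by
    intro w
    have h2 : (2 : ℚ) * SF d w = 2 * SF d' w := by
      rw [T.SF_eq, T.SF_eq, hB w, Finset.sum_congr rfl fun m _ => hEchi w m]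
    exact mul_left_cancel₀ two_ne_zero h2
  intro u
  by_cases hu : u.1 ∈ Set.range T.leaf
  · obtain ⟨m, hm⟩ := hu
    have hm0 : m ≠ 0 := by
      rintro rfl
      exact u.2 hm.symm
    rw [T.SA_leaf d u m hm0 hm.symm, T.SA_leaf d' u m hm0 hm.symm, hE m hm0]
  · rw [T.SA_internal d u hu, T.SA_internal d' u hu, hF u]
    congr 1
    exact Finset.sum_congr rfl fun c _ => by rw [hF c]

end PhyloTree

namespace Toric
variable {R C : Type*} [Fintype R] [Fintype C]

noncomputable def expo (M : Matrix R C ℕ) (d : C →₀ ℕ) : R →₀ ℕ :=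
  Finsupp.equivFunOnFinite.symm (fun r => ∑ c : C, M r c * d c)

lemma toricMap_monomial (M : Matrix R C ℕ) (d : C →₀ ℕ) (a : ℂ) :
    toricMap M (MvPolynomial.monomial d a) = MvPolynomial.monomial (expo M d) a := by
  rw [toricMap, MvPolynomial.aeval_monomial, MvPolynomial.monomial_eq]
  congr 1
  rw [Finsupp.prod_fintype _ _ (fun c => pow_zero _),
      Finsupp.prod_fintype _ _ (fun r => pow_zero _)]
  simp only [expo, Finsupp.coe_equivFunOnFinite_symm]
  have step1 : ∀ c : C, (∏ r : R, MvPolynomial.X (R := ℂ) r ^ M r c) ^ d c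
      = ∏ r : R, MvPolynomial.X r ^ (M r c * d c) := by
    intro c
    rw [← Finset.prod_pow]
    exact Finset.prod_congr rfl fun r _ => by rw [pow_mul]
  calc ∏ c : C, (∏ r : R, MvPolynomial.X (R := ℂ) r ^ M r c) ^ d c
      = ∏ c : C, ∏ r : R, MvPolynomial.X r ^ (M r c * d c) :=
        Finset.prod_congr rfl fun c _ => step1 c
    _ = ∏ r : R, ∏ c : C, MvPolynomial.X r ^ (M r c * d c) := Finset.prod_comm
    _ = ∏ r : R, MvPolynomial.X r ^ ∑ c : C, M r c * d c :=
        Finset.prod_congr rfl fun r _ => Finset.prod_pow_eq_pow_sum _ _ _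

lemma coeff_toricMap (M : Matrix R C ℕ) (f : MvPolynomial C ℂ) (m : R →₀ ℕ) :
    (toricMap M f).coeff m
      = ∑ d ∈ f.support.filter (fun d => expo M d = m), f.coeff d := by
  conv_lhs => rw [← MvPolynomial.support_sum_monomial_coeff f]
  rw [map_sum]
  simp only [toricMap_monomial, MvPolynomial.coeff_sum, MvPolynomial.coeff_monomial]
  rw [Finset.sum_filter]

lemma ker_le_ker (M N : Matrix R C ℕ)
    (h : ∀ d d' : C →₀ ℕ, expo M d = expo M d' → expo N d = expo N d') :
    RingHom.ker (toricMap M) ≤ RingHom.ker (toricMap N) := by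
  intro f hf
  rw [RingHom.mem_ker] at hf ⊢
  have hcoef : ∀ m, (toricMap M f).coeff m = 0 := by intro m; rw [hf]; simp
  apply MvPolynomial.ext
  intro m
  rw [coeff_toricMap, MvPolynomial.coeff_zero]
  set S := f.support.filter (fun d => expo N d = m) with hS
  rw [← Finset.sum_fiberwise_of_maps_to (g := expo M) (t := S.image (expo M))
      (fun x hx => Finset.mem_image_of_mem _ hx)]
  refine Finset.sum_eq_zero fun m' hm' => ?_
  obtain ⟨d0, hd0S, hd0⟩ := Finset.mem_image.mp hm'
  have : S.filter (fun d => expo M d = m') = f.support.filter (fun d => expo M d = m') := by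
    ext d
    simp only [hS, Finset.mem_filter, and_assoc]
    constructor
    · tauto
    · rintro ⟨hsupp, hMd⟩
      have hd0' := Finset.mem_filter.mp hd0S
      have := h d d0 (by rw [hMd, hd0])
      exact ⟨hsupp, by rw [this, hd0'.2], hMd⟩
  rw [this, ← coeff_toricMap, hcoef]


lemma expo_eq_iff (M : Matrix R C ℕ) (d d' : C →₀ ℕ) :
    expo M d = expo M d' ↔
      ∀ r, ∑ c : C, ((M r c : ℕ) : ℚ) * ((d c : ℕ) : ℚ)
            = ∑ c : C, ((M r c : ℕ) : ℚ) * ((d' c : ℕ) : ℚ) := by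
  rw [expo, expo, Finsupp.equivFunOnFinite.symm.injective.eq_iff, funext_iff]
  refine forall_congr' fun r => ?_
  rw [← Nat.cast_inj (R := ℚ)]
  push_cast
  rfl

end Toric

/-- For every rooted tree `T`, the toric ideals of `A_T` and `B_T` coincide:
`ker φ_{A_T} = ker φ_{B_T}` as ideals of `ℂ[p_{ij} : {i,j} ⊆ {0,…,n}, i ≠ j]`. -/
theorem statement3 (T : PhyloTree) :
    RingHom.ker (toricMap (Amat T ℕ)) = RingHom.ker (toricMap (Bmat T ℕ)) := by
  refine le_antisymm (Toric.ker_le_ker _ _ ?_) (Toric.ker_le_ker _ _ ?_)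
  · intro d d' h
    rw [Toric.expo_eq_iff] at h ⊢
    exact T.dirAB d d' h
  · intro d d' h
    rw [Toric.expo_eq_iff] at h ⊢
    exact T.dirBA d d' h
end

section
/- For every rooted tree T, the matrices A_T and B_T both have rank |Vert(T)| − 1 over ℚ; in particular, both matrices have full row rank, since each has exactly |Vert(T)| − 1 rows. -/
attribute [local instance] Classical.propDecidable

/-! Order the vertices by ancestry, the root being the least vertex. For a non-root vertex `v`
take the column `{0,i}` of `A_T` if `v` is the leaf `i`, and otherwise a column `{a,b}` with
`lca(a,b) = v`, which exists since `v` has two children: its support is `v` together with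
descendants of `v`. For `B_T` the column `{0,i}`, respectively the combination
`{0,a} + {0,b} - {a,b}`, is supported exactly on the ancestors of `v`; the latter takes the
value `2` there, since `e(u)` lies on `P(a,b)` iff `u` is an ancestor of exactly one of the
leaves `a`, `b`. Multiplying by these columns makes the matrices triangular with nonzero
diagonal, so their rows are linearly independent. -/

namespace Matrix

variable {m n α K : Type*} [Fintype m] [Fintype n] [Field K] [PartialOrder α]

theorem rank_eq_card_height_of_triangular_combinations (M : Matrix m n K) {f : m → α}
    (hf : Function.Injective f)
    (h : ∀ v, ∃ c : n → K, (M *ᵥ c) v ≠ 0 ∧ ∀ u, (M *ᵥ c) u ≠ 0 → f u ≤ f v) :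
    M.rank = Fintype.card m := by
  refine LinearIndependent.rank_matrix (Fintype.linearIndependent_iff.2 fun g hg => ?_)
  by_contra! hsupp
  obtain ⟨v, hv, hmin⟩ :=
    Set.Finite.exists_minimalFor f {u | g u ≠ 0} (Set.toFinite _) hsupp
  obtain ⟨c, hcv, hc⟩ := h v
  have hgM : g ᵥ* M = 0 := by
    rw [← hg]; ext j; simp [vecMul, dotProduct, Finset.sum_apply]
  have hzero : g ⬝ᵥ (M *ᵥ c) = g v * (M *ᵥ c) v := by
    refine Finset.sum_eq_single v (fun u _ huv => ?_) (by simp)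
    by_contra hu
    obtain ⟨hgu, hMu⟩ := mul_ne_zero_iff.1 hu
    have hlt : f u < f v := (hc u hMu).lt_of_ne (hf.ne huv)
    exact hlt.not_ge (hmin hgu hlt.le)
  rw [dotProduct_mulVec, hgM, zero_dotProduct] at hzero
  exact mul_ne_zero hv hcv hzero.symm

end Matrix

namespace PhyloTree

open Matrix

variable {T : PhyloTree}

lemma card_NR (T : PhyloTree) : Fintype.card T.NR = Fintype.card T.V - 1 := by
  rw [Fintype.card_subtype_compl, Fintype.card_subtype_eq]

lemma iterate_par_of_reaches_root {v : T.V} {r N : ℕ} (hr : T.par^[r] v = T.leaf 0)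
    (hN : r ≤ N) : T.par^[N] v = T.leaf 0 := by
  rw [← Nat.sub_add_cancel hN, Function.iterate_add_apply, hr,
    Function.iterate_fixed T.par_root]

/-- A cycle of `par` through `v` would make `v` periodic, yet every orbit ends at the fixed
root. -/
lemma isAnc_antisymm_s6 {u v : T.V} (huv : T.isAnc u v) (hvu : T.isAnc v u) : u = v := by
  obtain ⟨k, rfl⟩ := huv
  obtain ⟨m, hm⟩ := hvu
  rcases Nat.eq_zero_or_pos (m + k) with h0 | hpos
  · obtain rfl : k = 0 := by omega
    rfl
  have hper : Function.IsPeriodicPt T.par (m + k) v := by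
    rwa [Function.IsPeriodicPt, Function.IsFixedPt, Function.iterate_add_apply]
  obtain ⟨r, hr⟩ := T.reaches_root v
  have hv : v = T.leaf 0 := by
    rw [← (hper.mul_const r).eq]
    exact iterate_par_of_reaches_root hr (Nat.le_mul_of_pos_left r hpos)
  rw [hv, Function.iterate_fixed T.par_root]

instance : PartialOrder T.V where
  le := T.isAnc
  le_refl _ := ⟨0, rfl⟩
  le_trans _ _ _ := fun ⟨k, hk⟩ ⟨m, hm⟩ => ⟨k + m, by rw [Function.iterate_add_apply, hm, hk]⟩
  le_antisymm _ _ := isAnc_antisymm_s6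

lemma root_le (v : T.V) : T.leaf 0 ≤ v := T.reaches_root v

lemma le_root_iff {v : T.V} : v ≤ T.leaf 0 ↔ v = T.leaf 0 :=
  ⟨fun h => le_antisymm h (root_le v), fun h => h ▸ le_rfl⟩

lemma par_le (v : T.V) : T.par v ≤ v := ⟨1, rfl⟩

lemma par_lt {v : T.V} (hv : v ≠ T.leaf 0) : T.par v < v :=
  (par_le v).lt_of_ne (T.par_ne v hv)

lemma le_par_of_lt {u v : T.V} (h : u < v) : u ≤ T.par v := by
  obtain ⟨k, hk⟩ := h.le
  cases k with
  | zero => exact absurd hk.symm h.ne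
  | succ k => exact ⟨k, by rwa [← Function.iterate_succ_apply]⟩

lemma le_total_of_le {u v w : T.V} (hu : u ≤ w) (hv : v ≤ w) : u ≤ v ∨ v ≤ u := by
  obtain ⟨k, hk⟩ := hu
  obtain ⟨m, hm⟩ := hv
  rcases le_total k m with h | h
  · exact Or.inr ⟨m - k, by rw [← hk, ← Function.iterate_add_apply, Nat.sub_add_cancel h, hm]⟩
  · exact Or.inl ⟨k - m, by rw [← hm, ← Function.iterate_add_apply, Nat.sub_add_cancel h, hk]⟩

lemma eq_of_le_of_par_eq {u w : T.V} (h : u ≤ w) (hp : T.par u = T.par w)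
    (hu : u ≠ T.leaf 0) : u = w := by
  by_contra hne
  have := le_par_of_lt (h.lt_of_ne hne)
  rw [← hp] at this
  exact (par_lt hu).not_ge this

lemma exists_le_leaf (v : T.V) : ∃ i, v ≤ T.leaf i := by
  obtain ⟨w, hvw, hw⟩ :=
    Set.Finite.exists_le_maximal (Set.toFinite {w | v ≤ w}) (show v ≤ v from le_rfl)
  by_cases hw0 : w = T.leaf 0
  · exact ⟨0, hw0 ▸ hvw⟩
  have hchildless : ∀ u, T.par u ≠ w := by
    rintro u rfl
    have hlt : T.par u < u := par_lt fun h => hw0 (by rw [h, T.par_root])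
    exact hlt.not_ge (hw.2 (hvw.trans hlt.le) hlt.le)
  obtain ⟨i, rfl⟩ := (T.leaf_iff w hw0).2 hchildless
  exact ⟨i, hvw⟩

lemma pos_of_le_leaf {v : T.V} {i : Fin (T.n + 1)} (hv : v ≠ T.leaf 0) (h : v ≤ T.leaf i) :
    0 < i :=
  Fin.pos_iff_ne_zero.2 fun hi => hv (le_root_iff.1 (hi ▸ h))

lemma lca_le_left (i j : Fin (T.n + 1)) : T.lca i j ≤ T.leaf i := T.lca_anc_left i j

lemma lca_le_right (i j : Fin (T.n + 1)) : T.lca i j ≤ T.leaf j := T.lca_anc_right i j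

lemma le_lca_iff {w : T.V} {i j : Fin (T.n + 1)} :
    w ≤ T.lca i j ↔ w ≤ T.leaf i ∧ w ≤ T.leaf j :=
  ⟨fun h => ⟨h.trans (lca_le_left i j), h.trans (lca_le_right i j)⟩,
    fun h => T.lca_min i j w h.1 h.2⟩

lemma lca_comm (i j : Fin (T.n + 1)) : T.lca i j = T.lca j i :=
  le_antisymm (le_lca_iff.2 ⟨lca_le_right i j, lca_le_left i j⟩)
    (le_lca_iff.2 ⟨lca_le_right j i, lca_le_left j i⟩)

lemma lca_zero_left (i : Fin (T.n + 1)) : T.lca 0 i = T.leaf 0 :=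
  le_root_iff.1 (lca_le_left 0 i)

lemma exists_lca_eq {v : T.V} (hv : v ∉ Set.range T.leaf) :
    ∃ a b, a < b ∧ T.lca a b = v := by
  obtain ⟨c₁, c₂, hne, h₁, h₂⟩ := T.no_degree_two v hv
  have hv0 : v ≠ T.leaf 0 := fun h => hv ⟨0, h.symm⟩
  have hc₁ : c₁ ≠ T.leaf 0 := fun h => hv0 (by rw [← h₁, h, T.par_root])
  have hc₂ : c₂ ≠ T.leaf 0 := fun h => hv0 (by rw [← h₂, h, T.par_root])
  have hvc₁ : v < c₁ := h₁ ▸ par_lt hc₁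
  have hvc₂ : v < c₂ := h₂ ▸ par_lt hc₂
  have hsiblings : ∀ w, c₁ ≤ w → c₂ ≤ w → False := fun w h1 h2 =>
    (le_total_of_le h1 h2).elim (fun h => hne (eq_of_le_of_par_eq h (h₁.trans h₂.symm) hc₁))
      (fun h => hne (eq_of_le_of_par_eq h (h₂.trans h₁.symm) hc₂).symm)
  obtain ⟨a, ha⟩ := exists_le_leaf c₁
  obtain ⟨b, hb⟩ := exists_le_leaf c₂
  have hab : a ≠ b := by
    rintro rfl
    exact hsiblings _ ha hb
  have hnot : ¬ c₁ ≤ T.lca a b := fun h => hsiblings _ (h.trans (lca_le_right a b)) hb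
  have hlt : T.lca a b < c₁ :=
    ((le_total_of_le (lca_le_left a b) ha).resolve_right hnot).lt_of_not_ge hnot
  have hlca : T.lca a b = v :=
    le_antisymm (h₁ ▸ le_par_of_lt hlt) (le_lca_iff.2 ⟨hvc₁.le.trans ha, hvc₂.le.trans hb⟩)
  rcases hab.lt_or_gt with h | h
  · exact ⟨a, b, h, hlca⟩
  · exact ⟨b, a, h, lca_comm a b ▸ hlca⟩

lemma onPath_iff {u : T.V} {i j : Fin (T.n + 1)} :
    T.onPath u i j ↔ (u ≤ T.leaf i ∨ u ≤ T.leaf j) ∧ ¬ u ≤ T.lca i j := by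
  constructor
  · rintro ⟨hne, hle, hij⟩
    exact ⟨hij, fun h => hne (le_antisymm h hle)⟩
  · rintro ⟨hij, hnot⟩
    have hle : T.lca i j ≤ u := by
      rcases hij with h | h
      · exact (le_total_of_le h (lca_le_left i j)).resolve_left hnot
      · exact (le_total_of_le h (lca_le_right i j)).resolve_left hnot
    exact ⟨fun h => hnot h.le, hle, hij⟩

lemma amat_ne_zero_iff {u : T.NR} {p : PairIdx T.n} :
    Amat T ℚ u p ≠ 0 ↔
      u.1 = T.leaf p.1.1 ∨ u.1 = T.leaf p.1.2 ∨ u.1 = T.lca p.1.1 p.1.2 := by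
  rw [Amat, Matrix.of_apply]
  split_ifs with h <;> simp [h]

lemma bmat_apply (u : T.NR) (p : PairIdx T.n) :
    Bmat T ℚ u p = if (u.1 ≤ T.leaf p.1.1 ∨ u.1 ≤ T.leaf p.1.2) ∧ ¬ u.1 ≤ T.lca p.1.1 p.1.2
      then 1 else 0 :=
  if_congr onPath_iff rfl rfl

lemma exists_amat_col (v : T.NR) :
    ∃ p : PairIdx T.n, Amat T ℚ v p ≠ 0 ∧ ∀ u : T.NR, Amat T ℚ u p ≠ 0 → v.1 ≤ u.1 := by
  by_cases hv : v.1 ∈ Set.range T.leaf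
  · obtain ⟨i, hi⟩ := hv
    have hi0 : 0 < i := pos_of_le_leaf v.2 hi.ge
    refine ⟨⟨(0, i), hi0⟩, amat_ne_zero_iff.2 (Or.inr (Or.inl hi.symm)), fun u hu => ?_⟩
    rw [amat_ne_zero_iff, lca_zero_left] at hu
    rcases hu with h | h | h
    · exact absurd h u.2
    · exact (h.trans hi).ge
    · exact absurd h u.2
  · obtain ⟨a, b, hab, hlca⟩ := exists_lca_eq hv
    refine ⟨⟨(a, b), hab⟩, amat_ne_zero_iff.2 (Or.inr (Or.inr hlca.symm)), fun u hu => ?_⟩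
    rw [amat_ne_zero_iff] at hu
    rcases hu with h | h | h
    · exact h ▸ hlca ▸ lca_le_left a b
    · exact h ▸ hlca ▸ lca_le_right a b
    · exact (h.trans hlca).ge

lemma exists_bmat_combination (v : T.NR) :
    ∃ c : PairIdx T.n → ℚ, ∀ u : T.NR, (Bmat T ℚ *ᵥ c) u ≠ 0 ↔ u.1 ≤ v.1 := by
  have hroot : ∀ u : T.NR, ¬ u.1 ≤ T.leaf 0 := fun u h => u.2 (le_root_iff.1 h)
  by_cases hv : v.1 ∈ Set.range T.leaf
  · obtain ⟨i, hi⟩ := hv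
    have hi0 : 0 < i := pos_of_le_leaf v.2 hi.ge
    refine ⟨Pi.single ⟨(0, i), hi0⟩ 1, fun u => ?_⟩
    simp [bmat_apply, lca_zero_left, hroot, hi]
  · obtain ⟨a, b, hab, hlca⟩ := exists_lca_eq hv
    have ha0 : 0 < a := pos_of_le_leaf v.2 (hlca ▸ lca_le_left a b)
    have hb0 : 0 < b := pos_of_le_leaf v.2 (hlca ▸ lca_le_right a b)
    refine ⟨Pi.single ⟨(0, a), ha0⟩ 1 + Pi.single ⟨(0, b), hb0⟩ 1 - Pi.single ⟨(a, b), hab⟩ 1,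
      fun u => ?_⟩
    rw [← hlca, le_lca_iff, mulVec_sub, mulVec_add]
    simp only [Pi.add_apply, Pi.sub_apply, mulVec_single_one, col_apply, bmat_apply,
      lca_zero_left, le_lca_iff, hroot, false_or, not_false_eq_true, and_true]
    by_cases hua : u.1 ≤ T.leaf a <;> by_cases hub : u.1 ≤ T.leaf b <;> simp [hua, hub]

end PhyloTree

/-- For every rooted tree `T`, the matrices `A_T` and `B_T` both have rank
`|Vert(T)| − 1` over `ℚ`; in particular both have full row rank, since each has exactly
`|Vert(T)| − 1` rows. -/
theorem statement6 (T : PhyloTree) :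
    Fintype.card T.NR = Fintype.card T.V - 1 ∧
    (Amat T ℚ).rank = Fintype.card T.V - 1 ∧
    (Bmat T ℚ).rank = Fintype.card T.V - 1 := by
  refine ⟨PhyloTree.card_NR T, ?_, ?_⟩ <;> rw [← PhyloTree.card_NR]
  · refine (Amat T ℚ).rank_eq_card_height_of_triangular_combinations
      (f := fun u : T.NR => OrderDual.toDual u.1)
      (OrderDual.toDual.injective.comp Subtype.val_injective) fun v => ?_
    obtain ⟨p, hv, hp⟩ := PhyloTree.exists_amat_col v
    exact ⟨Pi.single p 1, by simpa using hv, fun u hu => hp u (by simpa using hu)⟩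
  · refine (Bmat T ℚ).rank_eq_card_height_of_triangular_combinations
      Subtype.val_injective fun v => ?_
    obtain ⟨c, hc⟩ := PhyloTree.exists_bmat_combination v
    exact ⟨c, (hc v).2 le_rfl, fun u => (hc u).1⟩
end
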